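/- For m = 3: if a word w of Hanoi automaton states is a concatenation of n one-letter words, then for every letter x, the section w|_x is a concatenation of at most ⌈(n+1)/2⌉ one-letter words. -/
import Mathlib


/-- States of the Hanoi automaton: the identity state `e` and a state `a i j`
for each transposition `(i j)`. -/
inductive HState where
  | e : HState
  | a : ℕ → ℕ → HState
deriving DecidableEq

/-- Output function: `a i j` swaps the letters `i` and `j`. -/
def HState.out : HState → ℕ → ℕ
  | .e, x => x
  | .a i j, x => if x = i then j else if x = j then i else x

/-- Transition (section) function: `a i j` goes to `e` on letters `i`, `j`
and stays put otherwise. -/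
def HState.sec : HState → ℕ → HState
  | .e, _ => .e
  | .a i j, x => if x = i ∨ x = j then .e else .a i j

/-- Action of a word of states on a letter: `(s₁⋯sₙ)(x) = s₁(s₂(⋯sₙ(x)))`. -/
def wordOut : List HState → ℕ → ℕ
  | [], x => x
  | s :: w, x => s.out (wordOut w x)

/-- Section of a word of states at a letter: `s'ᵢ = sᵢ|_{(sᵢ₊₁⋯sₙ)(x)}`. -/
def wordSec : List HState → ℕ → List HState
  | [], _ => []
  | s :: w, x => s.sec (wordOut w x) :: wordSec w x

/-- Action of a word of states on a word of letters. -/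
def wordAct : List HState → List ℕ → List ℕ
  | _, [] => []
  | w, x :: v => wordOut w x :: wordAct (wordSec w x) v

/-- Section of a word of states at a word of letters. -/
def wordSecW : List HState → List ℕ → List HState
  | w, [] => w
  | w, x :: v => wordSecW (wordSec w x) v

/-- A state of the Hanoi automaton `H_m`: either `e` or `a i j` with
`1 ≤ i < j ≤ m` (one state per transposition of `{1,…,m}`). -/
def IsHanoiState (m : ℕ) (s : HState) : Prop :=
  s = HState.e ∨ ∃ i j, s = HState.a i j ∧ 1 ≤ i ∧ i < j ∧ j ≤ m

/-- A one-letter word: all states lie in `{e, s}` for a single non-identity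
state `s` of `H_m`. -/
def OneLetterWord (m : ℕ) (w : List HState) : Prop :=
  ∃ s : HState, IsHanoiState m s ∧ s ≠ HState.e ∧ ∀ t ∈ w, t = HState.e ∨ t = s

lemma wordOut_append (u v : List HState) (x : ℕ) :
    wordOut (u ++ v) x = wordOut u (wordOut v x) := by
  induction u with
  | nil => rfl
  | cons s w ih => simp [wordOut, ih]

lemma wordSec_append (u v : List HState) (x : ℕ) :
    wordSec (u ++ v) x = wordSec u (wordOut v x) ++ wordSec v x := by
  induction u with
  | nil => rfl
  | cons s w ih => simp [wordSec, ih, wordOut_append]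

lemma out_mem {s : HState} (hs : IsHanoiState 3 s) {x : ℕ}
    (hx : 1 ≤ x ∧ x ≤ 3) : 1 ≤ s.out x ∧ s.out x ≤ 3 := by
  rcases hs with rfl | ⟨i, j, rfl, hi, hij, hj⟩
  · exact hx
  · simp only [HState.out]
    split <;> [omega; skip]
    split <;> omega

lemma wordOut_mem {w : List HState} (hw : ∀ t ∈ w, IsHanoiState 3 t) {x : ℕ}
    (hx : 1 ≤ x ∧ x ≤ 3) : 1 ≤ wordOut w x ∧ wordOut w x ≤ 3 := by
  induction w with
  | nil => exact hx
  | cons s w ih =>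
      exact out_mem (hw s (by simp)) (ih fun t ht => hw t (by simp [ht]))

lemma oneletter_hanoi {u : List HState} (hu : OneLetterWord 3 u) :
    ∀ t ∈ u, IsHanoiState 3 t := by
  obtain ⟨s, hs, _, h⟩ := hu
  intro t ht
  rcases h t ht with rfl | rfl
  · exact Or.inl rfl
  · exact hs

/-- Each component of a section of a word over `{e, a i j}` lies in `{e, a i j}`. -/
lemma sec_mem {i j : ℕ} {u : List HState}
    (hu : ∀ t ∈ u, t = HState.e ∨ t = HState.a i j) (x : ℕ) :
    ∀ t ∈ wordSec u x, t = HState.e ∨ t = HState.a i j := by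
  induction u with
  | nil => simp [wordSec]
  | cons s w ih =>
      intro t ht
      simp only [wordSec, List.mem_cons] at ht
      rcases ht with rfl | ht
      · rcases hu s (by simp) with rfl | rfl
        · exact Or.inl rfl
        · simp only [HState.sec]; split <;> simp
      · exact ih (fun t ht => hu t (by simp [ht])) t ht

/-- If the letter is moved by `(i j)`, the whole orbit stays inside `{i, j}`,
so the section of a word over `{e, a i j}` is trivial. -/
lemma wordOut_fixed {i j : ℕ} {u : List HState}
    (hu : ∀ t ∈ u, t = HState.e ∨ t = HState.a i j) {x : ℕ}
    (hx : x = i ∨ x = j) : wordOut u x = i ∨ wordOut u x = j := by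
  induction u with
  | nil => exact hx
  | cons s w ih =>
      have h := ih fun t ht => hu t (by simp [ht])
      rcases hu s (by simp) with rfl | rfl
      · exact h
      · simp only [wordOut, HState.out]
        split <;> [omega; skip]
        split <;> omega

lemma sec_trivial {i j : ℕ} {u : List HState}
    (hu : ∀ t ∈ u, t = HState.e ∨ t = HState.a i j) {x : ℕ}
    (hx : x = i ∨ x = j) : ∀ t ∈ wordSec u x, t = HState.e := by
  induction u with
  | nil => simp [wordSec]
  | cons s w ih =>
      intro t ht
      simp only [wordSec, List.mem_cons] at ht
      rcases ht with rfl | ht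
      · have hy := wordOut_fixed (fun r hr => hu r (List.mem_cons_of_mem _ hr)) hx
        rcases hu s (by simp) with rfl | rfl
        · rfl
        · simp [HState.sec, hy]
      · exact ih (fun t ht => hu t (by simp [ht])) t ht

/-- If the letter is fixed by `(i j)`, a word over `{e, a i j}` fixes it and
has trivial section data: the output is the letter itself. -/
lemma wordOut_untouched {i j : ℕ} {u : List HState}
    (hu : ∀ t ∈ u, t = HState.e ∨ t = HState.a i j) {x : ℕ}
    (hx : x ≠ i ∧ x ≠ j) : wordOut u x = x := by
  induction u with
  | nil => rfl
  | cons s w ih =>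
      have h := ih fun t ht => hu t (by simp [ht])
      rcases hu s (by simp) with rfl | rfl
      · simpa [wordOut, HState.out] using h
      · simp [wordOut, HState.out, h, hx.1, hx.2]

/-- Key lemma: the section of the product of two one-letter words at a letter
of `{1,2,3}` is a one-letter word. -/
lemma twosec {u v : List HState} (hu : OneLetterWord 3 u)
    (hv : OneLetterWord 3 v) {x : ℕ} (hx : 1 ≤ x ∧ x ≤ 3) :
    OneLetterWord 3 (wordSec (u ++ v) x) := by
  obtain ⟨s, hs, hse, hsu⟩ := hu
  obtain ⟨t, ht, hte, htv⟩ := hv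
  rcases hs with rfl | ⟨i, j, rfl, hi, hij, hj⟩
  · exact absurd rfl hse
  rcases ht with rfl | ⟨k, l, rfl, hk, hkl, hl⟩
  · exact absurd rfl hte
  rw [wordSec_append]
  by_cases hxkl : x = k ∨ x = l
  · -- section of v is all identities; section of u stays in {e, a i j}
    refine ⟨HState.a i j, Or.inr ⟨i, j, rfl, hi, hij, hj⟩, by simp, ?_⟩
    intro r hr
    rcases List.mem_append.mp hr with hr | hr
    · exact sec_mem hsu _ r hr
    · exact Or.inl (sec_trivial htv hxkl r hr)
  · push_neg at hxkl
    have hOut : wordOut v x = x := wordOut_untouched htv hxkl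
    rw [hOut]
    by_cases hxij : x = i ∨ x = j
    · -- section of u is all identities
      refine ⟨HState.a k l, Or.inr ⟨k, l, rfl, hk, hkl, hl⟩, by simp, ?_⟩
      intro r hr
      rcases List.mem_append.mp hr with hr | hr
      · exact Or.inl (sec_trivial hsu hxij r hr)
      · exact sec_mem htv _ r hr
    · -- then {i,j} = {k,l} = {1,2,3} \ {x}, so the two states coincide
      push_neg at hxij
      have hik : i = k ∧ j = l := by omega
      obtain ⟨rfl, rfl⟩ := hik
      refine ⟨HState.a i j, Or.inr ⟨i, j, rfl, hi, hij, hj⟩, by simp, ?_⟩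
      intro r hr
      rcases List.mem_append.mp hr with hr | hr
      · exact sec_mem hsu _ r hr
      · exact sec_mem htv _ r hr

/-- Section of a single one-letter word at any letter is a one-letter word. -/
lemma onesec {u : List HState} (hu : OneLetterWord 3 u) (x : ℕ) :
    OneLetterWord 3 (wordSec u x) := by
  obtain ⟨s, hs, hse, hsu⟩ := hu
  rcases hs with rfl | ⟨i, j, rfl, hi, hij, hj⟩
  · exact absurd rfl hse
  exact ⟨HState.a i j, Or.inr ⟨i, j, rfl, hi, hij, hj⟩, by simp, sec_mem hsu x⟩

/-- For `m = 3`: the section at a letter of a concatenation of `n` one-letter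
words is a concatenation of at most `⌈(n+1)/2⌉` one-letter words. -/
theorem section_concat_one_letter_words (n : ℕ) (ws : List (List HState))
    (hn : ws.length = n) (hws : ∀ u ∈ ws, OneLetterWord 3 u)
    (x : ℕ) (hx : x ∈ Finset.Icc 1 3) :
    ∃ ws' : List (List HState), ws'.length ≤ (n + 2) / 2 ∧
      (∀ u ∈ ws', OneLetterWord 3 u) ∧ wordSec ws.flatten x = ws'.flatten := by
  simp only [Finset.mem_Icc] at hx
  subst hn
  suffices h : ∀ N (ws : List (List HState)), ws.length ≤ N →
      (∀ u ∈ ws, OneLetterWord 3 u) →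
      ∃ ws' : List (List HState), ws'.length ≤ (ws.length + 2) / 2 ∧
        (∀ u ∈ ws', OneLetterWord 3 u) ∧ wordSec ws.flatten x = ws'.flatten from
    h ws.length ws le_rfl hws
  intro N
  induction N with
  | zero =>
      intro ws hlen _
      rw [List.length_eq_zero_iff.mp (Nat.le_zero.mp hlen)]
      exact ⟨[], by simp [wordSec]⟩
  | succ N ih =>
    intro ws hlen hws
    match ws with
    | [] => exact ⟨[], by simp [wordSec]⟩
    | [u] =>
        refine ⟨[wordSec u x], by simp, ?_, by simp⟩
        intro r hr
        simp only [List.mem_singleton] at hr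
        subst hr
        exact onesec (hws u (by simp)) x
    | u :: v :: rest =>
        obtain ⟨ws', h1, h2, h3⟩ := ih rest
          (by simp only [List.length_cons] at hlen; omega)
          (fun r hr => hws r (by simp [hr]))
        have hR : ∀ t ∈ rest.flatten, IsHanoiState 3 t := by
          intro t ht
          obtain ⟨r, hr, htr⟩ := List.mem_flatten.mp ht
          exact oneletter_hanoi (hws r (by simp [hr])) t htr
        have hy : 1 ≤ wordOut rest.flatten x ∧ wordOut rest.flatten x ≤ 3 :=
          wordOut_mem hR hx
        refine ⟨wordSec (u ++ v) (wordOut rest.flatten x) :: ws', ?_, ?_, ?_⟩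
        · simp only [List.length_cons] at h1 ⊢; omega
        · intro r hr
          rcases List.mem_cons.mp hr with rfl | hr
          · exact twosec (hws u (by simp)) (hws v (by simp)) hy
          · exact h2 r hr
        · have : (u :: v :: rest).flatten = (u ++ v) ++ rest.flatten := by
            simp [List.flatten]
          rw [this, wordSec_append, List.flatten_cons, h3]
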